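/- arXiv:2202.09340 — 2 statements merged into one kernel-verified Lean document; each statement's English description precedes it below -/
import Mathlib

section
/- Let f : ℝ^d → ℝ be a bounded measurable function, σ > 0, and u(x) = E_{δ∼N(0,σ²I)}[f(x+δ)]. Then u is twice differentiable at every x ∈ ℝ^d and its Hessian matrix satisfies Hu(x) = E_{δ∼N(0,σ²I)}[((δδᵀ − σ²I)/σ⁴) · f(x+δ)], where the expectation of the matrix-valued integrand is taken entrywise. -/
/-!
With `φ` the Gaussian density, `u x = ∫ f y • φ (y - x) dy`, so all dependence on `x` sits in the
smooth kernel and one may differentiate twice under the integral sign. Besides `φ ∈ L¹`, this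
needs integrable majorants, uniform for `x` near `x₀`, of the translates `Dφ (· - x)` and
`D²φ (· - x)`. Both derivatives are bounded by a multiple of `(1 + ‖δ‖²) φ δ`, and the translates
of that weight by `x` within distance `1` of `x₀` lie below a Gaussian centred at `x₀`. Since
`D²φ δ = φ δ • (δ δᵀ / σ⁴ - I / σ²)`, translating back gives the formula.
-/

open MeasureTheory Real

/-- The Gaussian probability measure `N(0, σ²I)` on `ℝ^d`, defined via its density
with respect to the Lebesgue measure. -/
noncomputable def gaussianMeasure (d : ℕ) (σ : ℝ) :
    Measure (EuclideanSpace ℝ (Fin d)) :=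
  volume.withDensity fun δ =>
    ENNReal.ofReal ((2 * π * σ ^ 2) ^ (-(d : ℝ) / 2) * Real.exp (-‖δ‖ ^ 2 / (2 * σ ^ 2)))

open Filter Topology Metric

open scoped InnerProductSpace

section LocallyDominatedTranslates

variable {E F G : Type*} [NormedAddCommGroup E] [MeasurableSpace E]
  [NormedAddCommGroup F] [NormedAddCommGroup G]

def LocallyDominatedTranslates (φ : E → F) (μ : Measure E) : Prop :=
  ∀ x₀, ∃ B : E → ℝ, Integrable B μ ∧ ∀ᶠ x in 𝓝 x₀, ∀ y, ‖φ (y - x)‖ ≤ B y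

variable {φ : E → F} {μ : Measure E}

theorem LocallyDominatedTranslates.mono (h : LocallyDominatedTranslates φ μ) {ψ : E → G} (c : ℝ)
    (hψ : ∀ z, ‖ψ z‖ ≤ c * ‖φ z‖) : LocallyDominatedTranslates ψ μ := by
  intro x₀
  obtain ⟨B, hB, hφB⟩ := h x₀
  refine ⟨fun y => |c| * B y, hB.const_mul _, hφB.mono fun x hx y => ?_⟩
  calc ‖ψ (y - x)‖ ≤ c * ‖φ (y - x)‖ := hψ _
    _ ≤ |c| * ‖φ (y - x)‖ := by gcongr; exact le_abs_self c
    _ ≤ |c| * B y := by gcongr; exact hx y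

theorem LocallyDominatedTranslates.integrable (h : LocallyDominatedTranslates φ μ)
    (hφ : AEStronglyMeasurable φ μ) : Integrable φ μ := by
  obtain ⟨B, hB, hφB⟩ := h 0
  exact hB.mono' hφ (ae_of_all _ fun y => by simpa using hφB.self_of_nhds y)

end LocallyDominatedTranslates

section ConvolutionDerivative

variable {E F : Type*} [NormedAddCommGroup E] [MeasurableSpace E] [BorelSpace E]
  [NormedAddCommGroup F] [NormedSpace ℝ F] {μ : Measure E} [μ.IsAddRightInvariant]

theorem integral_smul_comp_sub_eq (f : E → ℝ) (k : E → F) (x : E) :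
    ∫ y, f y • k (y - x) ∂μ = ∫ δ, f (x + δ) • k δ ∂μ := by
  rw [← integral_sub_right_eq_self (fun δ => f (x + δ) • k δ) x]
  simp only [add_sub_cancel]

variable [NormedSpace ℝ E] [SecondCountableTopology E] {k : E → F} {f : E → ℝ} {C : ℝ}

theorem hasFDerivAt_integral_smul_comp_sub (hk : ContDiff ℝ 1 k) (hk_int : Integrable k μ)
    (hdk : LocallyDominatedTranslates (fderiv ℝ k) μ) (hf : AEStronglyMeasurable f μ)
    (hfC : ∀ᵐ y ∂μ, ‖f y‖ ≤ C) (x₀ : E) :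
    HasFDerivAt (fun x => ∫ y, f y • k (y - x) ∂μ)
      (-∫ y, f y • fderiv ℝ k (y - x₀) ∂μ) x₀ := by
  obtain ⟨B, hB, hdkB⟩ := hdk x₀
  obtain ⟨ε, hε, hball⟩ := Metric.eventually_nhds_iff_ball.1 hdkB
  have hderiv (y x : E) : HasFDerivAt (fun x => f y • k (y - x))
      (-(f y • fderiv ℝ k (y - x))) x := by
    refine (((hk.differentiable one_ne_zero (y - x)).hasFDerivAt.comp x
      ((hasFDerivAt_id x).const_sub y)).const_smul (f y)).congr_fderiv ?_
    ext; simp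
  have hcont : Continuous (fderiv ℝ k) := hk.continuous_fderiv one_ne_zero
  rw [← integral_neg]
  refine hasFDerivAt_integral_of_dominated_of_fderiv_le (ball_mem_nhds x₀ hε)
    (bound := fun y => C * B y) (Eventually.of_forall fun x => ?_) ?_ ?_ ?_ (hB.const_mul C)
    (ae_of_all _ fun y x _ => hderiv y x)
  · exact hf.smul (hk.continuous.comp (continuous_sub_right x)).aestronglyMeasurable
  · exact (hk_int.comp_sub_right x₀).bdd_smul C hf hfC
  · exact (hf.smul (hcont.comp (continuous_sub_right x₀)).aestronglyMeasurable).neg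
  · filter_upwards [hfC] with y hy x hx
    rw [norm_neg, norm_smul]
    exact mul_le_mul hy (hball x hx y) (norm_nonneg _) ((norm_nonneg _).trans hy)

theorem hasFDerivAt_fderiv_integral_smul_comp_sub (hk : ContDiff ℝ 2 k)
    (hk_int : Integrable k μ) (hdk : LocallyDominatedTranslates (fderiv ℝ k) μ)
    (hd2k : LocallyDominatedTranslates (fderiv ℝ (fderiv ℝ k)) μ) (hf : AEStronglyMeasurable f μ)
    (hfC : ∀ᵐ y ∂μ, ‖f y‖ ≤ C) (x₀ : E) :
    HasFDerivAt (fderiv ℝ (fun x => ∫ y, f y • k (y - x) ∂μ))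
      (∫ y, f y • fderiv ℝ (fderiv ℝ k) (y - x₀) ∂μ) x₀ := by
  have hk1 : ContDiff ℝ 1 k := hk.of_le one_le_two
  have hdk1 : ContDiff ℝ 1 (fderiv ℝ k) := hk.fderiv_right le_rfl
  have hdk_int : Integrable (fderiv ℝ k) μ :=
    hdk.integrable (hk1.continuous_fderiv one_ne_zero).aestronglyMeasurable
  have hD1 : fderiv ℝ (fun x => ∫ y, f y • k (y - x) ∂μ) =
      fun x => -∫ y, f y • fderiv ℝ k (y - x) ∂μ :=
    funext fun x => (hasFDerivAt_integral_smul_comp_sub hk1 hk_int hdk hf hfC x).fderiv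
  rw [hD1]
  have h := (hasFDerivAt_integral_smul_comp_sub hdk1 hdk_int hd2k hf hfC x₀).fun_neg
  rwa [neg_neg] at h

theorem integral_smul_comp_sub_apply {L : E → E →L[ℝ] F} (hL : LocallyDominatedTranslates L μ)
    (hL_cont : Continuous L) (hf : AEStronglyMeasurable f μ) (hfC : ∀ᵐ y ∂μ, ‖f y‖ ≤ C)
    (x v : E) : (∫ y, f y • L (y - x) ∂μ) v = ∫ y, f y • L (y - x) v ∂μ := by
  have hint : Integrable (fun y => f y • L (y - x)) μ :=
    ((hL.integrable hL_cont.aestronglyMeasurable).comp_sub_right x).bdd_smul C hf hfC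
  rw [ContinuousLinearMap.integral_apply hint]
  rfl

theorem fderiv_fderiv_integral_smul_comp_sub_apply (hk : ContDiff ℝ 2 k)
    (hk_int : Integrable k μ) (hdk : LocallyDominatedTranslates (fderiv ℝ k) μ)
    (hd2k : LocallyDominatedTranslates (fderiv ℝ (fderiv ℝ k)) μ) (hf : AEStronglyMeasurable f μ)
    (hfC : ∀ᵐ y ∂μ, ‖f y‖ ≤ C) (x₀ v w : E) :
    fderiv ℝ (fun x => fderiv ℝ (fun x => ∫ y, f y • k (y - x) ∂μ) x w) x₀ v =
      ∫ δ, f (x₀ + δ) • fderiv ℝ (fderiv ℝ k) δ v w ∂μ := by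
  have hk1 : ContDiff ℝ 1 k := hk.of_le one_le_two
  have hdk1 : ContDiff ℝ 1 (fderiv ℝ k) := hk.fderiv_right le_rfl
  -- Differentiating the directional derivative `kw` keeps every integral `E →L[ℝ] F`-valued.
  set kw : E → F := fun z => fderiv ℝ k z w
  have hkw : ContDiff ℝ 1 kw := hdk1.clm_apply contDiff_const
  have hdkw (z u : E) : fderiv ℝ kw z u = fderiv ℝ (fderiv ℝ k) z u w := by
    rw [(((hdk1.differentiable one_ne_zero) z).hasFDerivAt.clm_apply
      (hasFDerivAt_const w z)).fderiv]
    simp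
  have hdkw_dom : LocallyDominatedTranslates (fderiv ℝ kw) μ :=
    hd2k.mono ‖w‖ fun z => ContinuousLinearMap.opNorm_le_bound _ (by positivity) fun u => by
      rw [hdkw]
      calc ‖fderiv ℝ (fderiv ℝ k) z u w‖ ≤ ‖fderiv ℝ (fderiv ℝ k) z‖ * ‖u‖ * ‖w‖ :=
            ContinuousLinearMap.le_opNorm₂ _ _ _
        _ = ‖w‖ * ‖fderiv ℝ (fderiv ℝ k) z‖ * ‖u‖ := by ring
  have hdk_int : Integrable (fderiv ℝ k) μ :=
    hdk.integrable (hk1.continuous_fderiv one_ne_zero).aestronglyMeasurable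
  have hkw_int : Integrable kw μ := hdk_int.apply_continuousLinearMap w
  have hD1 : (fun x => fderiv ℝ (fun x => ∫ y, f y • k (y - x) ∂μ) x w) =
      fun x => -∫ y, f y • kw (y - x) ∂μ := funext fun x => by
    rw [(hasFDerivAt_integral_smul_comp_sub hk1 hk_int hdk hf hfC x).fderiv,
      neg_apply, integral_smul_comp_sub_apply hdk
        (hk1.continuous_fderiv one_ne_zero) hf hfC]
  rw [hD1, fderiv_fun_neg,
    (hasFDerivAt_integral_smul_comp_sub hkw hkw_int hdkw_dom hf hfC x₀).fderiv, neg_neg,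
    integral_smul_comp_sub_apply hdkw_dom (hkw.continuous_fderiv one_ne_zero) hf hfC,
    integral_smul_comp_sub_eq f (fun z => fderiv ℝ kw z v)]
  simp only [hdkw]

end ConvolutionDerivative

theorem integrable_exp_neg_mul_sq_norm {V : Type*} [NormedAddCommGroup V] [InnerProductSpace ℝ V]
    [FiniteDimensional ℝ V] [MeasurableSpace V] [BorelSpace V] {b : ℝ} (hb : 0 < b) :
    Integrable fun v : V => exp (-b * ‖v‖ ^ 2) :=
  Integrable.of_integral_ne_zero <| by
    rw [GaussianFourier.integral_rexp_neg_mul_sq_norm hb]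
    positivity

/-- Half of the Gaussian decay absorbs the factor `1 + s²`, the other half survives moving the
centre by at most `1`. -/
theorem one_add_sq_mul_exp_neg_mul_sq_le {a r s : ℝ} (ha : 0 < a) (hr : 0 ≤ r) (hrs : r ≤ s + 1) :
    (1 + s ^ 2) * exp (-a * s ^ 2) ≤ (1 + 2 / a) * exp (a / 2) * exp (-(a / 4) * r ^ 2) := by
  have hsplit : exp (-a * s ^ 2) = exp (-(a / 2) * s ^ 2) * exp (-(a / 2) * s ^ 2) := by
    rw [← exp_add]; ring_nf
  have hpoly : (1 + s ^ 2) * exp (-(a / 2) * s ^ 2) ≤ 1 + 2 / a := by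
    rw [neg_mul, exp_neg, ← div_eq_mul_inv, div_le_iff₀ (exp_pos _)]
    have hcancel : 2 / a * (a / 2 * s ^ 2) = s ^ 2 := by field_simp
    calc 1 + s ^ 2 ≤ (1 + 2 / a) * (a / 2 * s ^ 2 + 1) := by
          have : 0 ≤ a / 2 * s ^ 2 + 2 / a := by positivity
          linear_combination this - hcancel
      _ ≤ (1 + 2 / a) * exp (a / 2 * s ^ 2) := by gcongr; exact add_one_le_exp _
  have hshift : exp (-(a / 2) * s ^ 2) ≤ exp (a / 2) * exp (-(a / 4) * r ^ 2) := by
    rw [← exp_add, exp_le_exp]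
    nlinarith [sq_nonneg (s - 1), mul_self_le_mul_self hr hrs]
  calc (1 + s ^ 2) * exp (-a * s ^ 2)
      = (1 + s ^ 2) * exp (-(a / 2) * s ^ 2) * exp (-(a / 2) * s ^ 2) := by rw [hsplit, mul_assoc]
    _ ≤ (1 + 2 / a) * (exp (a / 2) * exp (-(a / 4) * r ^ 2)) :=
      mul_le_mul hpoly hshift (exp_pos _).le (by positivity)
    _ = _ := by ring

section GaussianDensity

variable {d : ℕ} {σ : ℝ}

noncomputable def gaussianDensity (d : ℕ) (σ : ℝ) (δ : EuclideanSpace ℝ (Fin d)) : ℝ :=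
  (2 * π * σ ^ 2) ^ (-(d : ℝ) / 2) * exp (-‖δ‖ ^ 2 / (2 * σ ^ 2))

theorem gaussianDensity_nonneg (δ : EuclideanSpace ℝ (Fin d)) : 0 ≤ gaussianDensity d σ δ := by
  unfold gaussianDensity; positivity

theorem continuous_gaussianDensity : Continuous (gaussianDensity d σ) := by
  unfold gaussianDensity; fun_prop

theorem contDiff_gaussianDensity : ContDiff ℝ 2 (gaussianDensity d σ) :=
  contDiff_const.mul ((contDiff_norm_sq ℝ).neg.div_const _).exp

theorem integral_gaussianMeasure (h : EuclideanSpace ℝ (Fin d) → ℝ) :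
    ∫ δ, h δ ∂gaussianMeasure d σ = ∫ δ, gaussianDensity d σ δ * h δ := by
  change ∫ δ, h δ ∂volume.withDensity (fun δ => ENNReal.ofReal (gaussianDensity d σ δ)) = _
  rw [integral_withDensity_eq_integral_toReal_smul
    continuous_gaussianDensity.measurable.ennreal_ofReal
    (ae_of_all _ fun _ => ENNReal.ofReal_lt_top)]
  simp only [ENNReal.toReal_ofReal (gaussianDensity_nonneg _), smul_eq_mul]

theorem hasFDerivAt_gaussianDensity (δ : EuclideanSpace ℝ (Fin d)) :
    HasFDerivAt (gaussianDensity d σ) ((-(σ ^ 2)⁻¹ * gaussianDensity d σ δ) • innerSL ℝ δ) δ := by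
  have h := (((hasStrictFDerivAt_norm_sq δ).hasFDerivAt.fun_neg.mul_const
    (2 * σ ^ 2)⁻¹).exp).const_mul ((2 * π * σ ^ 2) ^ (-(d : ℝ) / 2))
  refine (h.congr_of_eventuallyEq (Eventually.of_forall fun x => ?_)).congr_fderiv ?_
  · simp only [gaussianDensity, div_eq_mul_inv]
  · ext v
    simp only [mul_inv_rev, neg_mul, smul_neg, neg_apply, smul_apply, coe_innerSL_apply,
      nsmul_eq_mul, Nat.cast_ofNat, smul_eq_mul, gaussianDensity, neg_smul, neg_inj]
    ring_nf

theorem fderiv_gaussianDensity :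
    fderiv ℝ (gaussianDensity d σ) = fun δ => (-(σ ^ 2)⁻¹ * gaussianDensity d σ δ) • innerSL ℝ δ :=
  funext fun δ => (hasFDerivAt_gaussianDensity δ).fderiv

theorem fderiv_fderiv_gaussianDensity_apply (δ v w : EuclideanSpace ℝ (Fin d)) :
    fderiv ℝ (fderiv ℝ (gaussianDensity d σ)) δ v w =
      gaussianDensity d σ δ * (⟪δ, v⟫_ℝ * ⟪δ, w⟫_ℝ / σ ^ 4 - ⟪v, w⟫_ℝ / σ ^ 2) := by
  have h := ((hasFDerivAt_gaussianDensity (σ := σ) δ).const_mul (-(σ ^ 2)⁻¹)).fun_smul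
    (innerSL ℝ (E := EuclideanSpace ℝ (Fin d))).hasFDerivAt
  rw [fderiv_gaussianDensity, h.fderiv]
  simp only [neg_mul, neg_smul, smul_neg, neg_neg, add_apply, neg_apply, smul_apply,
    ContinuousLinearMap.smulRight_apply, coe_innerSL_apply, smul_eq_mul]
  rw [innerSL_apply_apply, innerSL_apply_apply]
  ring

theorem norm_fderiv_gaussianDensity (δ : EuclideanSpace ℝ (Fin d)) :
    ‖fderiv ℝ (gaussianDensity d σ) δ‖ = ‖δ‖ / σ ^ 2 * gaussianDensity d σ δ := by
  simp only [fderiv_gaussianDensity, neg_mul, neg_smul, norm_neg, norm_smul, norm_mul, norm_inv,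
    norm_pow, norm_eq_abs, sq_abs, abs_of_nonneg (gaussianDensity_nonneg δ), innerSL_apply_norm]
  ring

theorem norm_fderiv_fderiv_gaussianDensity_le (δ : EuclideanSpace ℝ (Fin d)) :
    ‖fderiv ℝ (fderiv ℝ (gaussianDensity d σ)) δ‖ ≤
      (‖δ‖ ^ 2 / σ ^ 4 + 1 / σ ^ 2) * gaussianDensity d σ δ := by
  refine ContinuousLinearMap.opNorm_le_bound₂ _
    (mul_nonneg (by positivity) (gaussianDensity_nonneg δ)) fun v w => ?_
  have key : |⟪δ, v⟫_ℝ * ⟪δ, w⟫_ℝ / σ ^ 4 - ⟪v, w⟫_ℝ / σ ^ 2| ≤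
      (‖δ‖ ^ 2 / σ ^ 4 + 1 / σ ^ 2) * (‖v‖ * ‖w‖) :=
    calc _ ≤ |⟪δ, v⟫_ℝ| * |⟪δ, w⟫_ℝ| / σ ^ 4 + |⟪v, w⟫_ℝ| / σ ^ 2 := by
          grw [abs_sub, abs_div, abs_div, abs_mul, abs_of_nonneg (by positivity : (0 : ℝ) ≤ σ ^ 4),
            abs_of_nonneg (by positivity : (0 : ℝ) ≤ σ ^ 2)]
      _ ≤ (‖δ‖ * ‖v‖) * (‖δ‖ * ‖w‖) / σ ^ 4 + ‖v‖ * ‖w‖ / σ ^ 2 := by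
          gcongr <;> exact abs_real_inner_le_norm _ _
      _ = _ := by ring
  rw [fderiv_fderiv_gaussianDensity_apply, norm_mul, norm_of_nonneg (gaussianDensity_nonneg δ),
    Real.norm_eq_abs]
  calc _ ≤ gaussianDensity d σ δ * ((‖δ‖ ^ 2 / σ ^ 4 + 1 / σ ^ 2) * (‖v‖ * ‖w‖)) :=
        mul_le_mul_of_nonneg_left key (gaussianDensity_nonneg δ)
    _ = _ := by ring

theorem locallyDominatedTranslates_one_add_sq_norm_mul_gaussianDensity (hσ : σ ≠ 0) :
    LocallyDominatedTranslates (fun δ => (1 + ‖δ‖ ^ 2) * gaussianDensity d σ δ) volume := by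
  set a := (2 * σ ^ 2)⁻¹
  have ha : 0 < a := by positivity
  intro x₀
  refine ⟨fun y => (2 * π * σ ^ 2) ^ (-(d : ℝ) / 2) *
    ((1 + 2 / a) * exp (a / 2) * exp (-(a / 4) * ‖y - x₀‖ ^ 2)), ?_, ?_⟩
  · exact (((integrable_exp_neg_mul_sq_norm (by positivity)).comp_sub_right x₀).const_mul
      _).const_mul _
  · filter_upwards [ball_mem_nhds x₀ one_pos] with x hx y
    have hr : ‖y - x₀‖ ≤ ‖y - x‖ + 1 :=
      (norm_sub_le_norm_sub_add_norm_sub y x x₀).trans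
        (by gcongr; exact (mem_ball_iff_norm.1 hx).le)
    have hexp : -‖y - x‖ ^ 2 / (2 * σ ^ 2) = -a * ‖y - x‖ ^ 2 := by ring
    rw [norm_of_nonneg (mul_nonneg (by positivity) (gaussianDensity_nonneg _)), gaussianDensity,
      hexp, mul_left_comm]
    exact mul_le_mul_of_nonneg_left (one_add_sq_mul_exp_neg_mul_sq_le ha (norm_nonneg _) hr)
      (by positivity)

theorem integrable_gaussianDensity (hσ : σ ≠ 0) : Integrable (gaussianDensity d σ) :=
  ((locallyDominatedTranslates_one_add_sq_norm_mul_gaussianDensity hσ).mono 1 fun δ => by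
    rw [one_mul, norm_of_nonneg (gaussianDensity_nonneg δ), norm_of_nonneg
      (mul_nonneg (by positivity) (gaussianDensity_nonneg δ))]
    exact le_mul_of_one_le_left (gaussianDensity_nonneg δ) (by simp)).integrable
    continuous_gaussianDensity.aestronglyMeasurable

theorem locallyDominatedTranslates_fderiv_gaussianDensity (hσ : σ ≠ 0) :
    LocallyDominatedTranslates (fderiv ℝ (gaussianDensity d σ)) volume :=
  (locallyDominatedTranslates_one_add_sq_norm_mul_gaussianDensity hσ).mono (σ ^ 2)⁻¹ fun δ => by
    rw [norm_fderiv_gaussianDensity, norm_of_nonneg (mul_nonneg (by positivity)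
      (gaussianDensity_nonneg δ)), div_eq_inv_mul, mul_assoc]
    gcongr
    · exact gaussianDensity_nonneg δ
    · nlinarith [sq_nonneg (‖δ‖ - 1), norm_nonneg δ]

theorem locallyDominatedTranslates_fderiv_fderiv_gaussianDensity (hσ : σ ≠ 0) :
    LocallyDominatedTranslates (fderiv ℝ (fderiv ℝ (gaussianDensity d σ))) volume :=
  (locallyDominatedTranslates_one_add_sq_norm_mul_gaussianDensity hσ).mono (1 / σ ^ 4 + 1 / σ ^ 2)
    fun δ => by
      rw [norm_of_nonneg (mul_nonneg (by positivity) (gaussianDensity_nonneg δ)), ← mul_assoc]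
      refine (norm_fderiv_fderiv_gaussianDensity_le δ).trans ?_
      gcongr
      · exact gaussianDensity_nonneg δ
      · have : 0 ≤ 1 / σ ^ 4 + ‖δ‖ ^ 2 / σ ^ 2 := by positivity
        linear_combination this

end GaussianDensity

theorem stein_hessian_general (d : ℕ) (σ : ℝ) (hσ : 0 < σ)
    (f : EuclideanSpace ℝ (Fin d) → ℝ) (hf : Measurable f)
    (C : ℝ) (hbd : ∀ x, |f x| ≤ C)
    (u : EuclideanSpace ℝ (Fin d) → ℝ)
    (hu : ∀ x, u x = ∫ δ, f (x + δ) ∂(gaussianMeasure d σ)) :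
    ∀ x, (DifferentiableAt ℝ u x ∧ DifferentiableAt ℝ (fderiv ℝ u) x) ∧
      ∀ i j : Fin d,
        fderiv ℝ (fun y => fderiv ℝ u y (EuclideanSpace.single j (1 : ℝ))) x
            (EuclideanSpace.single i (1 : ℝ)) =
          ∫ δ, ((δ i * δ j - σ ^ 2 * (if i = j then (1 : ℝ) else 0)) / σ ^ 4) * f (x + δ)
            ∂(gaussianMeasure d σ) := by
  intro x
  have hu_conv : u = fun x => ∫ y, f y • gaussianDensity d σ (y - x) := funext fun x => by
    rw [hu, integral_gaussianMeasure, integral_smul_comp_sub_eq]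
    simp_rw [smul_eq_mul, mul_comm]
  subst hu_conv
  have hk : ContDiff ℝ 2 (gaussianDensity d σ) := contDiff_gaussianDensity
  have hk_int := integrable_gaussianDensity (d := d) hσ.ne'
  have hdk := locallyDominatedTranslates_fderiv_gaussianDensity (d := d) hσ.ne'
  have hd2k := locallyDominatedTranslates_fderiv_fderiv_gaussianDensity (d := d) hσ.ne'
  have hfC : ∀ᵐ y ∂volume, ‖f y‖ ≤ C := ae_of_all _ hbd
  refine ⟨⟨(hasFDerivAt_integral_smul_comp_sub (hk.of_le one_le_two) hk_int hdk
      hf.aestronglyMeasurable hfC x).differentiableAt,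
    (hasFDerivAt_fderiv_integral_smul_comp_sub hk hk_int hdk hd2k
      hf.aestronglyMeasurable hfC x).differentiableAt⟩, fun i j => ?_⟩
  rw [fderiv_fderiv_integral_smul_comp_sub_apply hk hk_int hdk hd2k hf.aestronglyMeasurable
    hfC, integral_gaussianMeasure]
  refine integral_congr_ae (ae_of_all _ fun δ => ?_)
  simp only [smul_eq_mul, fderiv_fderiv_gaussianDensity_apply, EuclideanSpace.inner_single_right,
    PiLp.single_apply, conj_trivial, one_mul, eq_comm (a := j)]
  split_ifs <;> field_simp

theorem stein_hessian (d : ℕ) (hd : 0 < d) (σ : ℝ) (hσ : 0 < σ)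
    (f : EuclideanSpace ℝ (Fin d) → ℝ) (hf : Measurable f)
    (C : ℝ) (hbd : ∀ x, |f x| ≤ C)
    (u : EuclideanSpace ℝ (Fin d) → ℝ)
    (hu : ∀ x, u x = ∫ δ, f (x + δ) ∂(gaussianMeasure d σ)) :
    ∀ x, (DifferentiableAt ℝ u x ∧ DifferentiableAt ℝ (fderiv ℝ u) x) ∧
      ∀ i j : Fin d,
        fderiv ℝ (fun y => fderiv ℝ u y (EuclideanSpace.single j (1 : ℝ))) x
            (EuclideanSpace.single i (1 : ℝ)) =
          ∫ δ, ((δ i * δ j - σ ^ 2 * (if i = j then (1 : ℝ) else 0)) / σ ^ 4) * f (x + δ)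
            ∂(gaussianMeasure d σ) :=
  stein_hessian_general d σ hσ f hf C hbd u hu
end

section
/- Let f : ℝ^d → ℝ be L-Lipschitz with respect to the Euclidean norm, and σ > 0. Then for every x ∈ ℝ^d, the second moment of the control-variate Stein gradient estimator integrand is bounded independently of σ: E_{δ∼N(0,σ²I)}[ ‖(δ/σ²) · (f(x+δ) − f(x))‖² ] ≤ L² d (d + 2). -/
/-!
Since `f` is `L`-Lipschitz, the integrand is at most `L² ‖δ‖⁴ / σ⁴` pointwise, so the bound
reduces to the Gaussian fourth moment `E ‖δ‖⁴ = σ⁴ d (d + 2)`. All moments `E ‖δ‖ᵖ` are computed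
in polar coordinates: the radial integral `∫ r^(d-1+p) e^(-r²/(2σ²)) dr` is a Gamma integral, and
the volume `π^(d/2) / Γ(d/2 + 1)` of the unit ball cancels the normalising constant, leaving
`(2σ²)^(p/2) Γ((d + p)/2) / Γ(d/2)`.
-/

open MeasureTheory Real

open Module Set

section WithDensityOfReal

variable {α E : Type*} [MeasurableSpace α] {μ : Measure α} [NormedAddCommGroup E] [NormedSpace ℝ E]
  {ρ : α → ℝ}

theorem integral_withDensity_ofReal_eq_integral_smul (hρ : Measurable ρ) (hρ0 : ∀ x, 0 ≤ ρ x)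
    (g : α → E) :
    ∫ x, g x ∂μ.withDensity (fun x => ENNReal.ofReal (ρ x)) = ∫ x, ρ x • g x ∂μ := by
  simp_rw [integral_withDensity_eq_integral_toReal_smul hρ.ennreal_ofReal
    (.of_forall fun _ => ENNReal.ofReal_lt_top), ENNReal.toReal_ofReal (hρ0 _)]

theorem integrable_withDensity_ofReal_iff_integrable_smul (hρ : Measurable ρ)
    (hρ0 : ∀ x, 0 ≤ ρ x) {g : α → E} :
    Integrable g (μ.withDensity fun x => ENNReal.ofReal (ρ x)) ↔
      Integrable (fun x => ρ x • g x) μ := by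
  simp_rw [integrable_withDensity_iff_integrable_smul' hρ.ennreal_ofReal
    (.of_forall fun _ => ENNReal.ofReal_lt_top), ENNReal.toReal_ofReal (hρ0 _)]

end WithDensityOfReal

theorem pow_pred_mul_rpow_of_pos {n : ℕ} (hn : 0 < n) (p : ℝ) {y : ℝ} (hy : 0 < y) :
    y ^ (n - 1) * y ^ p = y ^ ((n : ℝ) - 1 + p) := by
  rw [rpow_add hy, ← Nat.cast_pred hn, rpow_natCast]

theorem integral_pow_pred_smul_rpow_mul_exp_neg_mul_sq {n : ℕ} (hn : 0 < n) {b p : ℝ}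
    (hb : 0 < b) (hp : -(n : ℝ) < p) :
    ∫ y in Ioi (0 : ℝ), y ^ (n - 1) • (y ^ p * exp (-b * y ^ 2)) =
      b ^ (-(n + p) / 2) * (1 / 2) * Gamma ((n + p) / 2) := by
  rw [setIntegral_congr_fun measurableSet_Ioi fun y hy => by
      rw [smul_eq_mul, ← mul_assoc, pow_pred_mul_rpow_of_pos hn p hy, ← rpow_two],
    integral_rpow_mul_exp_neg_mul_rpow two_pos (by linarith) hb]
  ring_nf

section RadialMoments

variable {E : Type*} [NormedAddCommGroup E] [InnerProductSpace ℝ E] [FiniteDimensional ℝ E]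
  [MeasurableSpace E] [BorelSpace E] [Nontrivial E] {b p : ℝ}

theorem integrable_norm_rpow_mul_exp_neg_mul_sq_norm (hb : 0 < b)
    (hp : -(finrank ℝ E : ℝ) < p) :
    Integrable (fun x : E => ‖x‖ ^ p * exp (-b * ‖x‖ ^ 2)) := by
  rw [integrable_fun_norm_addHaar volume (f := fun y => y ^ p * exp (-b * y ^ 2))]
  refine (integrableOn_rpow_mul_exp_neg_mul_sq hb (s := (finrank ℝ E : ℝ) - 1 + p)
    (by linarith)).congr_fun (fun y hy => ?_) measurableSet_Ioi
  rw [smul_eq_mul, ← mul_assoc, pow_pred_mul_rpow_of_pos finrank_pos p hy]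

theorem integral_norm_rpow_mul_exp_neg_mul_sq_norm (hb : 0 < b)
    (hp : -(finrank ℝ E : ℝ) < p) :
    ∫ x : E, ‖x‖ ^ p * exp (-b * ‖x‖ ^ 2) =
      π ^ ((finrank ℝ E : ℝ) / 2) * b ^ (-((finrank ℝ E : ℝ) + p) / 2) *
        Gamma (((finrank ℝ E : ℝ) + p) / 2) / Gamma ((finrank ℝ E : ℝ) / 2) := by
  have hn : 0 < (finrank ℝ E : ℝ) := Nat.cast_pos.mpr finrank_pos
  have unit_ball : volume.real (Metric.ball (0 : E) 1) =
      π ^ ((finrank ℝ E : ℝ) / 2) / Gamma ((finrank ℝ E : ℝ) / 2 + 1) := by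
    rw [measureReal_def, InnerProductSpace.volume_ball, ENNReal.ofReal_one, one_pow, one_mul,
      ENNReal.toReal_ofReal (by positivity), sqrt_eq_rpow, ← rpow_natCast,
      ← rpow_mul pi_pos.le, one_div_mul_eq_div]
  rw [integral_fun_norm_addHaar volume (fun y => y ^ p * exp (-b * y ^ 2)),
    integral_pow_pred_smul_rpow_mul_exp_neg_mul_sq finrank_pos hb hp, unit_ball,
    Gamma_add_one (by positivity), nsmul_eq_mul, smul_eq_mul]
  have := (Gamma_pos_of_pos (half_pos hn)).ne'
  field_simp

end RadialMoments

section GaussianMoments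

variable {d : ℕ} {σ : ℝ}

theorem integral_gaussianMeasure_s13 (g : EuclideanSpace ℝ (Fin d) → ℝ) :
    ∫ δ, g δ ∂gaussianMeasure d σ =
      (2 * π * σ ^ 2) ^ (-(d : ℝ) / 2) * ∫ δ, g δ * exp (-(2 * σ ^ 2)⁻¹ * ‖δ‖ ^ 2) := by
  rw [gaussianMeasure, integral_withDensity_ofReal_eq_integral_smul (by fun_prop)
    (fun _ => by positivity), ← integral_const_mul]
  congr 1 with δ
  rw [smul_eq_mul]
  ring_nf

theorem integrable_gaussianMeasure_iff (hσ : σ ≠ 0) {g : EuclideanSpace ℝ (Fin d) → ℝ} :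
    Integrable g (gaussianMeasure d σ) ↔
      Integrable (fun δ => g δ * exp (-(2 * σ ^ 2)⁻¹ * ‖δ‖ ^ 2)) := by
  rw [gaussianMeasure, integrable_withDensity_ofReal_iff_integrable_smul (by fun_prop)
    (fun _ => by positivity), ← integrable_const_mul_iff
      (c := (2 * π * σ ^ 2) ^ (-(d : ℝ) / 2)) (isUnit_iff_ne_zero.mpr (by positivity))
      fun δ => g δ * exp (-(2 * σ ^ 2)⁻¹ * ‖δ‖ ^ 2)]
  congr! 2 with δ
  rw [smul_eq_mul]
  ring_nf

theorem integrable_norm_rpow_gaussianMeasure (hd : 0 < d) (hσ : σ ≠ 0) {p : ℝ}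
    (hp : -(d : ℝ) < p) :
    Integrable (fun δ => ‖δ‖ ^ p) (gaussianMeasure d σ) := by
  have := Fin.pos_iff_nonempty.mp hd
  rw [integrable_gaussianMeasure_iff hσ]
  exact integrable_norm_rpow_mul_exp_neg_mul_sq_norm (by positivity) (by simpa)

theorem integral_norm_rpow_gaussianMeasure (hd : 0 < d) (hσ : σ ≠ 0) {p : ℝ}
    (hp : -(d : ℝ) < p) :
    ∫ δ, ‖δ‖ ^ p ∂gaussianMeasure d σ =
      (2 * σ ^ 2) ^ (p / 2) * Gamma ((d + p) / 2) / Gamma (d / 2) := by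
  have := Fin.pos_iff_nonempty.mp hd
  rw [integral_gaussianMeasure_s13, integral_norm_rpow_mul_exp_neg_mul_sq_norm (by positivity)
    (by simpa), finrank_euclideanSpace_fin]
  have hs : 0 < 2 * σ ^ 2 := by positivity
  rw [show 2 * π * σ ^ 2 = π * (2 * σ ^ 2) by ring, mul_rpow pi_pos.le hs.le, inv_rpow hs.le,
    ← rpow_neg hs.le]
  have pi_cancel : π ^ (-(d : ℝ) / 2) * π ^ ((d : ℝ) / 2) = 1 := by
    rw [← rpow_add pi_pos, neg_div, neg_add_cancel, rpow_zero]
  have scale : (2 * σ ^ 2) ^ (-(d : ℝ) / 2) * (2 * σ ^ 2) ^ (-(-((d : ℝ) + p) / 2)) =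
      (2 * σ ^ 2) ^ (p / 2) := by
    rw [← rpow_add hs]; ring_nf
  rw [mul_div_assoc, ← mul_assoc, mul_mul_mul_comm, pi_cancel, one_mul, scale, mul_div_assoc]

theorem integrable_norm_pow_gaussianMeasure (hd : 0 < d) (hσ : σ ≠ 0) (n : ℕ) :
    Integrable (fun δ => ‖δ‖ ^ n) (gaussianMeasure d σ) := by
  simpa using integrable_norm_rpow_gaussianMeasure hd hσ (p := n)
    (by linarith [(Nat.cast_pos.mpr hd : (0 : ℝ) < d), n.cast_nonneg (α := ℝ)])

theorem integral_norm_pow_four_gaussianMeasure (hd : 0 < d) (hσ : σ ≠ 0) :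
    ∫ δ, ‖δ‖ ^ 4 ∂gaussianMeasure d σ = σ ^ 4 * d * (d + 2) := by
  have h := integral_norm_rpow_gaussianMeasure hd hσ (p := 4)
    (by linarith [d.cast_nonneg (α := ℝ)])
  rw [show ((d : ℝ) + 4) / 2 = d / 2 + 1 + 1 by ring, Gamma_add_one (by positivity),
    Gamma_add_one (by positivity)] at h
  simp only [show (4 : ℝ) / 2 = 2 by norm_num, rpow_ofNat] at h
  rw [h]
  field_simp

end GaussianMoments

theorem control_variate_gradient_estimator_second_moment (d : ℕ) (hd : 0 < d)
    (σ : ℝ) (hσ : 0 < σ)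
    (f : EuclideanSpace ℝ (Fin d) → ℝ)
    (L : ℝ) (hf : ∀ x y, |f x - f y| ≤ L * ‖x - y‖) :
    ∀ x, (∫ δ, ‖((f (x + δ) - f x) / σ ^ 2) • δ‖ ^ 2 ∂(gaussianMeasure d σ)) ≤
      L ^ 2 * d * (d + 2) := by
  intro x
  have pointwise (δ : EuclideanSpace ℝ (Fin d)) :
      ‖((f (x + δ) - f x) / σ ^ 2) • δ‖ ^ 2 ≤ L ^ 2 / σ ^ 4 * ‖δ‖ ^ 4 := by
    have hlip : |f (x + δ) - f x| ≤ L * ‖δ‖ := by simpa using hf (x + δ) x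
    calc ‖((f (x + δ) - f x) / σ ^ 2) • δ‖ ^ 2 = (|f (x + δ) - f x| * ‖δ‖) ^ 2 / σ ^ 4 := by
          rw [norm_smul, norm_div, Real.norm_eq_abs, norm_pow, Real.norm_eq_abs, abs_of_pos hσ]
          ring
      _ ≤ (L * ‖δ‖ * ‖δ‖) ^ 2 / σ ^ 4 := by gcongr
      _ = L ^ 2 / σ ^ 4 * ‖δ‖ ^ 4 := by ring
  calc ∫ δ, ‖((f (x + δ) - f x) / σ ^ 2) • δ‖ ^ 2 ∂gaussianMeasure d σ
      ≤ ∫ δ, L ^ 2 / σ ^ 4 * ‖δ‖ ^ 4 ∂gaussianMeasure d σ :=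
        integral_mono_of_nonneg (.of_forall fun _ => by positivity)
          ((integrable_norm_pow_gaussianMeasure hd hσ.ne' 4).const_mul _) (.of_forall pointwise)
    _ = L ^ 2 * d * (d + 2) := by
        rw [integral_const_mul, integral_norm_pow_four_gaussianMeasure hd hσ.ne']
        field_simp
end
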